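/- arXiv:2504.18218 — 3 statements merged into one kernel-verified Lean document; each statement's English description precedes it below -/
import Mathlib

section
/- Let H be a finite simple graph whose maximum degree is at most d, where d ≥ 1, let v be a vertex of H, and let ℓ ≥ 1 be an integer. Then the number of sets T ⊆ V(H) with v ∈ T, |T| ≤ ℓ, and H[T] connected is at most d^{2ℓ-2} + 1. -/
attribute [local instance 10] Classical.propDecidable

/-- A trigraph: a finite simple graph whose edges are partitioned into black and red edges. -/
structure Trigraph (α : Type) where
  verts : Finset α
  black : α → α → Prop
  red : α → α → Prop
  black_symm : ∀ x y, black x y → black y x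
  red_symm : ∀ x y, red x y → red y x
  black_irrefl : ∀ x, ¬ black x x
  red_irrefl : ∀ x, ¬ red x x
  black_red_disjoint : ∀ x y, black x y → ¬ red x y
  black_mem : ∀ x y, black x y → x ∈ verts ∧ y ∈ verts
  red_mem : ∀ x y, red x y → x ∈ verts ∧ y ∈ verts

namespace Trigraph

/-- The red graph of a trigraph. -/
def redGraph {α : Type} (G : Trigraph α) : SimpleGraph α where
  Adj := G.red
  symm := ⟨fun x y h => G.red_symm x y h⟩
  loopless := ⟨fun x h => G.red_irrefl x h⟩

/-- The red degree of a vertex. -/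
noncomputable def redDegree {α : Type} (G : Trigraph α) (x : α) : ℕ :=
  Set.ncard {y | G.red x y}

end Trigraph

variable {α : Type} [DecidableEq α]

/-- `Contracts G G' u v w` : the trigraph `G'` is obtained from the trigraph `G` by
contracting the two distinct vertices `u, v` into the new vertex `w`. -/
def Contracts (G G' : Trigraph α) (u v w : α) : Prop :=
  u ∈ G.verts ∧ v ∈ G.verts ∧ u ≠ v ∧ w ∉ G.verts ∧
  G'.verts = insert w (G.verts \ {u, v}) ∧
  (∀ x ∈ G.verts \ {u, v}, (G'.black w x ↔ G.black u x ∧ G.black v x)) ∧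
  (∀ x ∈ G.verts \ {u, v},
    (G'.red w x ↔ (¬ (G.black u x ∧ G.black v x)) ∧
      (G.black u x ∨ G.red u x ∨ G.black v x ∨ G.red v x))) ∧
  (∀ x, x ∈ G.verts \ {u, v} → ∀ y, y ∈ G.verts \ {u, v} →
    ((G'.black x y ↔ G.black x y) ∧ (G'.red x y ↔ G.red x y)))

/-- A contraction sequence `(G = G₁, …, Gₙ)` of a graph `G` (a trigraph with no red edges),
together with the data of the contracted vertices `cu i, cv i` and the new vertex `cw i`
at each step `i ∈ [2, n]`. -/
structure ContractionSeq (α : Type) [DecidableEq α] (n : ℕ) where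
  seq : ℕ → Trigraph α
  cu : ℕ → α
  cv : ℕ → α
  cw : ℕ → α
  one_le : 1 ≤ n
  init_noRed : ∀ x y, ¬ (seq 1).red x y
  last_single : (seq n).verts.card = 1
  step : ∀ i, 2 ≤ i → i ≤ n → Contracts (seq (i - 1)) (seq i) (cu i) (cv i) (cw i)

namespace ContractionSeq

variable {n : ℕ}

/-- The contraction sequence has width `d`: every vertex of every trigraph in the
sequence has red degree at most `d`. -/
def HasWidth (C : ContractionSeq α n) (d : ℕ) : Prop :=
  ∀ i, 1 ≤ i → i ≤ n → ∀ x, (C.seq i).redDegree x ≤ d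

/-- The bag `β(u)` of a vertex `u` of `Gᵢ`: the set of vertices of `G = G₁`
contracted into `u`. -/
def bag (C : ContractionSeq α n) : ℕ → α → Finset α
  | 0, x => {x}
  | 1, x => {x}
  | i + 2, x =>
    if x = C.cw (i + 2) then bag C (i + 1) (C.cu (i + 2)) ∪ bag C (i + 1) (C.cv (i + 2))
    else bag C (i + 1) x

/-- `β(T)`, the union of the bags of the vertices in `T`. -/
def bags (C : ContractionSeq α n) (i : ℕ) (T : Finset α) : Finset α :=
  T.biUnion (C.bag i)

end ContractionSeq

variable {n : ℕ}

/-- A basic `i`-profile `(T, D)`. -/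
def IsBasicProfile (C : ContractionSeq α n) (k d i : ℕ) (T D : Finset α) : Prop :=
  T ⊆ (C.seq i).verts ∧ T.card ≤ k * (d + 1) ∧
  (SimpleGraph.induce (↑T : Set α) (C.seq i).redGraph).Connected ∧
  D ⊆ T ∧ D.card ≤ k

/-- `T' = (T \ {v}) ∪ {u₁, u₂}` where `v = cw i` is the new vertex of `Gᵢ` and
`u₁ = cu i`, `u₂ = cv i` are the vertices contracted into it. -/
def newT (C : ContractionSeq α n) (i : ℕ) (T : Finset α) : Finset α :=
  T.erase (C.cw i) ∪ {C.cu i, C.cv i}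

/-- `D' ⊆ T'` is compatible with the basic `i`-profile `(T, D)`. -/
def DCompat (C : ContractionSeq α n) (k i : ℕ) (T D D' : Finset α) : Prop :=
  D' ⊆ newT C i T ∧
  D.erase (C.cw i) = (D'.erase (C.cu i)).erase (C.cv i) ∧
  D'.card ≤ k ∧
  (C.cw i ∈ D ↔ (C.cu i ∈ D' ∨ C.cv i ∈ D'))

/-- A `D'`-decomposition `{(T₁, D₁), …, (Tₘ, Dₘ)}` of the basic `i`-profile `(T, D)`. -/
def IsDDecomp (C : ContractionSeq α n) (k d i : ℕ) (T D D' : Finset α)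
    (m : ℕ) (Tj Dj : Fin m → Finset α) : Prop :=
  (∀ j, IsBasicProfile C k d (i - 1) (Tj j) (Dj j)) ∧
  (∀ j ℓ, j ≠ ℓ → Disjoint (Tj j) (Tj ℓ)) ∧
  newT C i T = Finset.univ.biUnion Tj ∧
  D' = Finset.univ.biUnion Dj ∧
  DCompat C k i T D D' ∧
  (∀ j ℓ, j ≠ ℓ → ∀ x ∈ Tj j, ∀ y ∈ Dj ℓ, ¬ (C.seq (i - 1)).red x y)

/-- An extended `i`-profile `(T, D, M, f)`; the function `f : T → [0, k]` is modelled as a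
function `f : α → ℕ` vanishing outside `T`. -/
def IsExtProfile (C : ContractionSeq α n) (k d i : ℕ) (T D M : Finset α) (f : α → ℕ) : Prop :=
  IsBasicProfile C k d i T D ∧ M ⊆ T ∧
  (∀ u, u ∉ T → f u = 0) ∧
  (∀ u ∈ T, f u ≤ k) ∧
  (∑ u ∈ T, f u) ≤ k ∧
  (∀ u ∈ T, f u ≤ (C.bag i u).card) ∧
  D = T.filter (fun u => f u ≠ 0)

/-- A solution of an extended `i`-profile `(T, D, M, f)`. -/
def IsSolution (C : ContractionSeq α n) (i : ℕ) (T : Finset α) (f : α → ℕ)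
    (S : Finset α) : Prop :=
  S ⊆ C.bags i T ∧ ∀ u ∈ T, f u = (S ∩ C.bag i u).card

/-- The closed neighborhood `N[S]` of `S` in the graph `G = G₁`. -/
def closedNbhd (C : ContractionSeq α n) (S : Finset α) : Set α :=
  ↑S ∪ {x | ∃ y ∈ S, (C.seq 1).black x y}

/-- The dominating-set-value `|N[S] ∩ β(M)|` of a solution `S`. -/
noncomputable def dsValue (C : ContractionSeq α n) (i : ℕ) (M S : Finset α) : ℕ :=
  Set.ncard (closedNbhd C S ∩ ↑(C.bags i M))

/-- The vertex-cover-value of a solution `S`: the number of edges of `G` with one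
endpoint in `S` and the other endpoint in `β(T)`. -/
noncomputable def vcValue (C : ContractionSeq α n) (i : ℕ) (T S : Finset α) : ℕ :=
  Set.ncard {e : Sym2 α | ∃ x y, e = s(x, y) ∧ (C.seq 1).black x y ∧ x ∈ S ∧ y ∈ C.bags i T}

/-- The function `f' : T' → [0, k]` is compatible with the extended `i`-profile
`(T, D, M, f)`. -/
def FCompat (C : ContractionSeq α n) (k i : ℕ) (T : Finset α) (f f' : α → ℕ) : Prop :=
  (∀ u, u ∉ newT C i T → f' u = 0) ∧
  (∀ u ∈ newT C i T, f' u ≤ k) ∧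
  f (C.cw i) = f' (C.cu i) + f' (C.cv i) ∧
  f' (C.cu i) ≤ (C.bag (i - 1) (C.cu i)).card ∧
  f' (C.cv i) ≤ (C.bag (i - 1) (C.cv i)).card ∧
  (∀ u ∈ T.erase (C.cw i), f' u = f u)

/-- `D' = {u ∈ T' : f'(u) ≠ 0}`. -/
def Dset (C : ContractionSeq α n) (i : ℕ) (T : Finset α) (f' : α → ℕ) : Finset α :=
  (newT C i T).filter (fun u => f' u ≠ 0)

/-- `M-hat = (M \ {v}) ∪ {u₁, u₂}` if `v ∈ M`, and `M-hat = M` otherwise. -/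
def Mhat (C : ContractionSeq α n) (i : ℕ) (M : Finset α) : Finset α :=
  if C.cw i ∈ M then M.erase (C.cw i) ∪ {C.cu i, C.cv i} else M

/-- `M' = {u ∈ M-hat : u has no black neighbor in D' in G_{i-1}}`. -/
noncomputable def Mset (C : ContractionSeq α n) (i : ℕ) (M D' : Finset α) : Finset α :=
  (Mhat C i M).filter (fun u => ¬ ∃ w ∈ D', (C.seq (i - 1)).black u w)

/-- An `f'`-decomposition `{(Tⱼ, Dⱼ, Mⱼ, fⱼ) : j ∈ [m]}` of the extended `i`-profile
`(T, D, M, f)`. -/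
def IsFDecomp (C : ContractionSeq α n) (k d i : ℕ) (T D M : Finset α) (f' : α → ℕ)
    (m : ℕ) (Tj Dj Mj : Fin m → Finset α) (fj : Fin m → α → ℕ) : Prop :=
  (∀ j, IsExtProfile C k d (i - 1) (Tj j) (Dj j) (Mj j) (fj j)) ∧
  (∀ j, ∀ u ∈ Tj j, fj j u = f' u) ∧
  Dset C i T f' = Finset.univ.biUnion Dj ∧
  Mset C i M (Dset C i T f') = Finset.univ.biUnion Mj ∧
  IsDDecomp C k d i T D (Dset C i T f') m Tj Dj

/-- The adjacency relation of the expanded graph `G_π` of a virtual profile with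
context `T`, virtual vertices `Vv` and virtual edges `E`. -/
def expAdj (C : ContractionSeq α n) (i : ℕ) (T Vv : Finset α) (E : Finset (Sym2 α))
    (x y : α) : Prop :=
  (x ∈ C.bags i T ∧ y ∈ C.bags i T ∧ (C.seq 1).black x y) ∨
  (x ∈ Vv ∧ y ∈ Vv ∧ s(x, y) ∈ E) ∨
  (y ∈ Vv ∧ ∃ u ∈ T, x ∈ C.bag i u ∧ s(u, y) ∈ E) ∨
  (x ∈ Vv ∧ ∃ u ∈ T, y ∈ C.bag i u ∧ s(u, x) ∈ E)

/-- A virtual `i`-profile `(T, D, V, E, f, H)`.  The graph `H` is given by its labeling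
`h : [k] → V(H)` (so `V(H)` is the range of `h`) and its edge set `HE`. -/
def IsVirtualProfile (C : ContractionSeq α n) (k d i : ℕ)
    (T D Vv : Finset α) (E : Finset (Sym2 α)) (f h : Fin k → α)
    (HE : Finset (Sym2 α)) : Prop :=
  IsBasicProfile C k d i T D ∧
  Vv.card ≤ k ∧
  (∀ x ∈ Vv, ∀ j, 1 ≤ j → j ≤ n → x ∉ (C.seq j).verts) ∧
  (∀ e ∈ E, ∃ u w, e = s(u, w) ∧ u ∈ Vv ∪ T ∧ w ∈ Vv) ∧
  (∀ a, f a ∈ D ∪ Vv) ∧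
  (∀ x ∈ D ∪ Vv, ∃ a, f a = x) ∧
  (∀ u ∈ D, (Finset.univ.filter (fun a => f a = u)).card ≤ (C.bag i u).card) ∧
  (∀ e ∈ HE, ¬ e.IsDiag ∧ ∀ x ∈ e, ∃ a, h a = x)

/-- A solution `(s₁, …, s_k)` of a virtual `i`-profile. -/
def IsVSolution (C : ContractionSeq α n) (i k : ℕ)
    (T D Vv : Finset α) (E : Finset (Sym2 α)) (f h : Fin k → α) (HE : Finset (Sym2 α))
    (sol : Fin k → α) : Prop :=
  (∀ a, (f a ∈ Vv → sol a = f a) ∧ (f a ∈ D → sol a ∈ C.bag i (f a))) ∧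
  (∀ a b, sol a = sol b ↔ h a = h b) ∧
  (∀ a b, expAdj C i T Vv E (sol a) (sol b) ↔ s(h a, h b) ∈ HE)

/-- Quantifier-free first-order formulas in the language of graphs with free variables
`x₁, …, x_k, y` (the variable `y` being the last one). -/
inductive QF (k : ℕ) : Type where
  | eq : Fin (k + 1) → Fin (k + 1) → QF k
  | adj : Fin (k + 1) → Fin (k + 1) → QF k
  | not : QF k → QF k
  | and : QF k → QF k → QF k
  | or : QF k → QF k → QF k

/-- Satisfaction of a quantifier-free formula under an adjacency relation `A` and a
valuation `val` of the variables. -/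
def QF.Sat {β : Type} {k : ℕ} (A : β → β → Prop) (val : Fin (k + 1) → β) : QF k → Prop
  | .eq a b => val a = val b
  | .adj a b => A (val a) (val b)
  | .not φ => ¬ QF.Sat A val φ
  | .and φ ψ => QF.Sat A val φ ∧ QF.Sat A val ψ
  | .or φ ψ => QF.Sat A val φ ∨ QF.Sat A val ψ

/-- The value `Σ_{α ∈ I} |{u ∈ β(T) : G_π ⊨ ψ_α(s₁, …, s_k, u)}|` of a solution of a
virtual `i`-profile. -/
noncomputable def vValue {I : Type} [Fintype I] {k : ℕ} (ψ : I → QF k)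
    (C : ContractionSeq α n) (i : ℕ) (T Vv : Finset α) (E : Finset (Sym2 α))
    (sol : Fin k → α) : ℕ :=
  ∑ a : I, Set.ncard {u : α | u ∈ C.bags i T ∧
    QF.Sat (expAdj C i T Vv E) (Fin.snoc sol u) (ψ a)}

/-- The function `f' : [k] → T' ∪ V` is compatible with the virtual `i`-profile. -/
def VFCompat (C : ContractionSeq α n) (i k : ℕ) (f f' : Fin k → α) : Prop :=
  ∀ a, (f a = C.cw i → (f' a = C.cu i ∨ f' a = C.cv i)) ∧ (f a ≠ C.cw i → f' a = f a)

/-- `E' = {uw ∈ E : u, w ∈ T' ∪ V} ∪ {u₁w, u₂w : vw ∈ E}`. -/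
def Eprime (C : ContractionSeq α n) (i : ℕ) (T Vv : Finset α) (E : Finset (Sym2 α)) :
    Set (Sym2 α) :=
  {e | e ∈ E ∧ ∀ x ∈ e, x ∈ newT C i T ∪ Vv} ∪
  {e | ∃ w, s(C.cw i, w) ∈ E ∧ (e = s(C.cu i, w) ∨ e = s(C.cv i, w))}

/-- `D' = range(f') ∩ T'`. -/
noncomputable def rangeD {k : ℕ} (C : ContractionSeq α n) (i : ℕ) (T : Finset α)
    (f' : Fin k → α) : Finset α :=
  (newT C i T).filter (fun u => ∃ a, f' a = u)

/-- An `f'`-decomposition `{(Tⱼ, Dⱼ, Vⱼ, Eⱼ, fⱼ, H) : j ∈ [m]}` of the virtual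
`i`-profile `(T, D, V, E, f, H)`. -/
def IsVDecomp (C : ContractionSeq α n) (k d i : ℕ)
    (T D Vv : Finset α) (E : Finset (Sym2 α)) (f h : Fin k → α) (HE : Finset (Sym2 α))
    (f' : Fin k → α) (m : ℕ) (Tj Dj Vj : Fin m → Finset α)
    (Ej : Fin m → Finset (Sym2 α)) (fj : Fin m → Fin k → α) : Prop :=
  IsDDecomp C k d i T D (rangeD C i T f') m Tj Dj ∧
  (∀ j, IsVirtualProfile C k d (i - 1) (Tj j) (Dj j) (Vj j) (Ej j) (fj j) h HE) ∧
  (∀ j, Vj j =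
    Vv ∪ (Finset.univ.filter (fun a => f' a ∈ rangeD C i T f' \ Dj j)).image h) ∧
  (∀ j a, (f' a ∈ Dj j ∪ Vv → fj j a = f' a) ∧
          (f' a ∈ rangeD C i T f' \ Dj j → fj j a = h a)) ∧
  (∀ j e, e ∈ Ej j ↔
    ((e ∈ Eprime C i T Vv E ∧ ∀ x ∈ e, x ∈ Vv ∪ Tj j) ∨
     (∃ u a, e = s(u, h a) ∧ u ∈ Vv ∪ Tj j ∧ f' a ∈ rangeD C i T f' \ Dj j ∧
        (s(u, f' a) ∈ Eprime C i T Vv E ∨ (C.seq (i - 1)).black u (f' a))) ∨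
     (∃ a b, e = s(h a, h b) ∧ s(h a, h b) ∈ HE ∧
        f' a ∈ rangeD C i T f' \ Dj j ∧ f' b ∈ rangeD C i T f' \ Dj j)))

/-- `⊕_{j ∈ [m]} sⱼ = s¹ ⊕ (s² ⊕ ( … ))`, where the `a`-th entry of `s¹ ⊕ s²` is
`s¹ a` if `f₁ a ∈ D₁` and `s² a` otherwise. -/
noncomputable def bigOplus {k : ℕ} [Nonempty α] :
    (m : ℕ) → (Fin m → Fin k → α) → (Fin m → Fin k → α) → (Fin m → Finset α) →
      Fin k → α
  | 0, _, _, _ => fun _ => Classical.arbitrary α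
  | 1, sol, _, _ => sol 0
  | m + 2, sol, f, D => fun a =>
      if f 0 a ∈ D 0 then sol 0 a
      else bigOplus (m + 1) (fun j => sol j.succ) (fun j => f j.succ)
        (fun j => D j.succ) a

/-!
A connected set `T ∋ v` with `2 ≤ |T| ≤ ℓ` is the vertex set of a closed walk at `v` of length
exactly `2ℓ - 2`: grow it from `{v}` one vertex at a time, each new vertex `x` being attached to
the walk by a detour `w → x → w` along an edge leaving the current set, and then pad with detours
along an edge at `v`. Closed walks of length `m` at `v` number at most `d ^ m`, and the singleton
`{v}` accounts for the `+ 1`.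
-/

namespace SimpleGraph

variable {V : Type} {G : SimpleGraph V}

theorem Walk.exists_length_add_two_support_toFinset_eq_insert [DecidableEq V] {u v w x : V}
    (p : G.Walk u v) (hw : w ∈ p.support) (hwx : G.Adj w x) :
    ∃ q : G.Walk u v, q.length = p.length + 2 ∧
      q.support.toFinset = insert x p.support.toFinset := by
  obtain ⟨p₁, p₂, rfl⟩ := Walk.mem_support_iff_exists_append.mp hw
  refine ⟨p₁.append (.cons hwx (.cons hwx.symm p₂)), by simp; omega, ?_⟩
  ext y
  have := p₂.start_mem_support
  simp only [List.mem_toFinset, Walk.mem_support_append_iff, Walk.support_cons,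
    List.mem_cons, Finset.mem_insert]
  grind

theorem Walk.exists_length_add_two_mul_support_toFinset_eq [DecidableEq V] {u v w x : V}
    (p : G.Walk u v) (hw : w ∈ p.support) (hx : x ∈ p.support) (hwx : G.Adj w x) (j : ℕ) :
    ∃ q : G.Walk u v, q.length = p.length + 2 * j ∧
      q.support.toFinset = p.support.toFinset := by
  induction j with
  | zero => exact ⟨p, rfl, rfl⟩
  | succ j ih =>
    obtain ⟨q, hlen, hsupp⟩ := ih
    obtain ⟨q', hlen', hsupp'⟩ := q.exists_length_add_two_support_toFinset_eq_insert
      (by simpa [← List.mem_toFinset, hsupp] using hw) hwx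
    refine ⟨q', by omega, ?_⟩
    rw [hsupp', hsupp, Finset.insert_eq_of_mem (List.mem_toFinset.mpr hx)]

theorem exists_adj_of_induce_connected {T S : Finset V}
    (hT : (G.induce (↑T : Set V)).Connected) (hST : S ⊆ T) (hS : S.Nonempty)
    (hne : S ≠ T) : ∃ w ∈ S, ∃ x ∈ T, x ∉ S ∧ G.Adj w x := by
  obtain ⟨s, hs⟩ := hS
  obtain ⟨t, htT, htS⟩ := Finset.exists_of_ssubset (hST.ssubset_of_ne hne)
  obtain ⟨p⟩ := hT ⟨s, hST hs⟩ ⟨t, htT⟩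
  obtain ⟨d, -, hd₁, hd₂⟩ := p.exists_boundary_dart {y | y.val ∈ S} hs htS
  exact ⟨_, hd₁, _, d.snd.2, hd₂, d.adj⟩

theorem card_finsetWalkLength_le [DecidableEq V] [G.LocallyFinite] {d : ℕ}
    (hdeg : ∀ v, G.degree v ≤ d) (m : ℕ) (u w : V) :
    (G.finsetWalkLength m u w).card ≤ d ^ m := by
  induction m generalizing u with
  | zero =>
    unfold finsetWalkLength
    split_ifs with h
    · subst h; simp
    · simp
  | succ m ih =>
    calc (G.finsetWalkLength (m + 1) u w).card
        ≤ ∑ x : G.neighborSet u, (G.finsetWalkLength m x w).card := by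
          rw [finsetWalkLength]
          exact Finset.card_biUnion_le.trans (by simp)
      _ ≤ ∑ _x : G.neighborSet u, d ^ m := Finset.sum_le_sum fun x _ => ih x
      _ = G.degree u * d ^ m := by
          rw [Finset.sum_const, Finset.card_univ, card_neighborSet_eq_degree, smul_eq_mul]
      _ ≤ d ^ (m + 1) := by rw [pow_succ']; exact Nat.mul_le_mul_right _ (hdeg u)

theorem exists_walk_support_toFinset_eq_of_induce_connected [DecidableEq V]
    {T : Finset V} {v : V} (hT : (G.induce (↑T : Set V)).Connected) (hv : v ∈ T) :
    ∃ p : G.Walk v v, p.length = 2 * (T.card - 1) ∧ p.support.toFinset = T := by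
  have grow : ∀ k < T.card, ∃ p : G.Walk v v, p.length = 2 * k ∧
      p.support.toFinset ⊆ T ∧ p.support.toFinset.card = k + 1 := by
    intro k
    induction k with
    | zero => exact fun _ => ⟨.nil, rfl, by simpa, by simp⟩
    | succ k ih =>
      intro hk
      obtain ⟨p, hlen, hsub, hcard⟩ := ih (by omega)
      obtain ⟨w, hw, x, hxT, hxp, hwx⟩ := exists_adj_of_induce_connected hT hsub
        ⟨v, by simp⟩ (by rintro rfl; omega)
      obtain ⟨q, hqlen, hqsupp⟩ :=
        p.exists_length_add_two_support_toFinset_eq_insert (List.mem_toFinset.mp hw) hwx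
      refine ⟨q, by omega, ?_, ?_⟩
      · rw [hqsupp]; exact Finset.insert_subset hxT hsub
      · rw [hqsupp, Finset.card_insert_of_notMem hxp, hcard]
  have hT₁ := Finset.card_pos.mpr ⟨v, hv⟩
  obtain ⟨p, hlen, hsub, hcard⟩ := grow (T.card - 1) (by omega)
  exact ⟨p, hlen, Finset.eq_of_subset_of_card_le hsub (by omega)⟩

theorem exists_walk_length_eq_support_toFinset_eq_of_induce_connected [DecidableEq V]
    {T : Finset V} {v : V} {ℓ : ℕ} (hT : (G.induce (↑T : Set V)).Connected) (hv : v ∈ T)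
    (hT₂ : 2 ≤ T.card) (hTℓ : T.card ≤ ℓ) :
    ∃ p : G.Walk v v, p.length = 2 * ℓ - 2 ∧ p.support.toFinset = T := by
  obtain ⟨p, hlen, hsupp⟩ := exists_walk_support_toFinset_eq_of_induce_connected hT hv
  obtain ⟨w, hw, x, hxT, -, hwx⟩ := exists_adj_of_induce_connected hT
    (Finset.singleton_subset_iff.mpr hv) (Finset.singleton_nonempty v)
    (by rintro rfl; simp at hT₂)
  rw [Finset.mem_singleton] at hw
  subst hw
  obtain ⟨q, hqlen, hqsupp⟩ :=
    p.exists_length_add_two_mul_support_toFinset_eq p.start_mem_support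
      (by rw [← List.mem_toFinset, hsupp]; exact hxT) hwx (ℓ - T.card)
  exact ⟨q, by omega, hqsupp.trans hsupp⟩

end SimpleGraph

theorem card_connected_subsets_le_general {V : Type} [Fintype V]
    (H : SimpleGraph V) [DecidableRel H.Adj] (d ℓ : ℕ)
    (hdeg : ∀ v, H.degree v ≤ d) (v : V) :
    Set.ncard {T : Finset V | v ∈ T ∧ T.card ≤ ℓ ∧
        (SimpleGraph.induce (↑T : Set V) H).Connected}
      ≤ d ^ (2 * ℓ - 2) + 1 := by
  classical
  set W := H.finsetWalkLength (2 * ℓ - 2) v v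
  have hsub :
      {T : Finset V | v ∈ T ∧ T.card ≤ ℓ ∧ (H.induce (↑T : Set V)).Connected} ⊆
        insert {v} ↑(W.image fun p => p.support.toFinset) := by
    rintro T ⟨hv, hTℓ, hT⟩
    obtain hT₁ | hT₂ := Nat.lt_or_ge T.card 2
    · left
      exact Finset.eq_singleton_iff_unique_mem.mpr
        ⟨hv, fun x hx => Finset.card_le_one.mp (by omega) x hx v hv⟩
    · right
      obtain ⟨p, hlen, hsupp⟩ :=
        SimpleGraph.exists_walk_length_eq_support_toFinset_eq_of_induce_connected hT hv hT₂ hTℓ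
      exact Finset.mem_coe.mpr
        (Finset.mem_image.mpr ⟨p, SimpleGraph.mem_finsetWalkLength_iff.mpr hlen, hsupp⟩)
  calc _ ≤ (insert {v} (↑(W.image fun p => p.support.toFinset) : Set (Finset V))).ncard :=
        Set.ncard_le_ncard hsub (Set.toFinite _)
    _ ≤ (W.image fun p => p.support.toFinset).card + 1 := by
        rw [← Set.ncard_coe_finset]; exact Set.ncard_insert_le _ _
    _ ≤ W.card + 1 := by gcongr; exact Finset.card_image_le
    _ ≤ d ^ (2 * ℓ - 2) + 1 := by gcongr; exact SimpleGraph.card_finsetWalkLength_le hdeg _ _ _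

/-- In a finite simple graph of maximum degree at most `d ≥ 1`, the
number of connected vertex subsets of size at most `ℓ ≥ 1` containing a fixed vertex `v`
is at most `d^(2ℓ-2) + 1`. -/
theorem card_connected_subsets_le {V : Type} [Fintype V] [DecidableEq V]
    (H : SimpleGraph V) [DecidableRel H.Adj] (d ℓ : ℕ) (hd : 1 ≤ d) (hℓ : 1 ≤ ℓ)
    (hdeg : ∀ v, H.degree v ≤ d) (v : V) :
    Set.ncard {T : Finset V | v ∈ T ∧ T.card ≤ ℓ ∧
        (SimpleGraph.induce (↑T : Set V) H).Connected}
      ≤ d ^ (2 * ℓ - 2) + 1 :=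
  card_connected_subsets_le_general H d ℓ hdeg v
end

section
/- Let G be a graph with a contraction sequence (G = G_1, ..., G_n) of width d and let k be a natural number. Let i in [2, n], let v be the unique vertex of V(G_i) \ V(G_{i-1}), let u_1, u_2 be the two vertices of V(G_{i-1}) \ V(G_i) contracted into v, let π = (T, D) be a basic i-profile with v in T, let T' = (T \ {v}) ∪ {u_1, u_2}, and let D' ⊆ T' be compatible with π. Then there exists a D'-decomposition of π containing at most d + 2 basic (i-1)-profiles. -/
attribute [local instance 10] Classical.propDecidable

variable {α : Type} [DecidableEq α]

variable {n : ℕ}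

/-!
The parts are red components of `T'` in `G_{i-1}`. If all of them have at most `k(d+1)`
vertices, take them all: each contains `u₁`, `u₂`, or a red neighbour of `v` in `Gᵢ`, because
`T` is red-connected in `Gᵢ` and the red edges of `Gᵢ` and `G_{i-1}` agree away from `v`; so there
are at most `d + 2` of them. Otherwise `T'` is red-connected and `|T'| = k(d+1) + 1` exceeds
`|D' ∪ N(D')|`, so some `z ∈ T'` lies outside `D'` and has no red neighbour in `D'`. Then the parts
are `{z}` and the red components of `T' \ {z}`, each of which contains one of the at most `d` red
neighbours of `z`.
-/

namespace SimpleGraph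

variable {V : Type*} {G G' : SimpleGraph V} {x y z : V}

/-- `x` and `y` lie in the same connected component of `G.induce S`, phrased without subtypes. -/
def ConnectedIn (G : SimpleGraph V) (S : Set V) (x y : V) : Prop :=
  ∃ t ⊆ S, x ∈ t ∧ y ∈ t ∧ (G.induce t).Connected

namespace ConnectedIn

variable {S S' : Set V}

lemma refl (hx : x ∈ S) : G.ConnectedIn S x x :=
  ⟨{x}, Set.singleton_subset_iff.2 hx, rfl, rfl, ⟨Preconnected.of_subsingleton⟩⟩

lemma symm (h : G.ConnectedIn S x y) : G.ConnectedIn S y x :=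
  let ⟨t, htS, hx, hy, ht⟩ := h
  ⟨t, htS, hy, hx, ht⟩

lemma trans (hxy : G.ConnectedIn S x y) (hyz : G.ConnectedIn S y z) : G.ConnectedIn S x z :=
  let ⟨t, htS, hx, hy, ht⟩ := hxy
  let ⟨t', ht'S, hy', hz, ht'⟩ := hyz
  ⟨t ∪ t', Set.union_subset htS ht'S, Or.inl hx, Or.inr hz,
    induce_union_connected ht.preconnected ht'.preconnected ⟨y, hy, hy'⟩⟩

lemma mem_right (h : G.ConnectedIn S x y) : y ∈ S :=
  let ⟨_, htS, _, hy, _⟩ := h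
  htS hy

lemma of_adj (hx : x ∈ S) (hy : y ∈ S) (hxy : G.Adj x y) : G.ConnectedIn S x y :=
  ⟨{x, y}, Set.insert_subset hx (Set.singleton_subset_iff.2 hy), Set.mem_insert x _,
    Set.mem_insert_of_mem x rfl, induce_pair_connected_of_adj hxy⟩

lemma mono (hS : S ⊆ S') (hG : ∀ a ∈ S, ∀ b ∈ S, G.Adj a b → G'.Adj a b)
    (h : G.ConnectedIn S x y) : G'.ConnectedIn S' x y :=
  let ⟨t, htS, hx, hy, ht⟩ := h
  ⟨t, htS.trans hS, hx, hy, ht.mono fun a b hab => hG a (htS a.2) b (htS b.2) hab⟩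

lemma eq_of_forall_not_adj (hx : ∀ w, ¬ G.Adj x w) (h : G.ConnectedIn S x y) : y = x := by
  obtain ⟨t, -, hxt, hyt, ht⟩ := h
  obtain ⟨p⟩ := ht.preconnected ⟨x, hxt⟩ ⟨y, hyt⟩
  cases p with
  | nil => rfl
  | cons hadj _ => exact absurd hadj (hx _)

end ConnectedIn

variable {S S' : Finset V}

noncomputable def componentIn (G : SimpleGraph V) (S : Finset V) (x : V) : Finset V :=
  S.filter (G.ConnectedIn S x)

lemma mem_componentIn : y ∈ G.componentIn S x ↔ G.ConnectedIn S x y := by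
  simp only [componentIn, Finset.mem_filter, and_iff_right_iff_imp]
  exact fun h => h.mem_right

lemma componentIn_subset : G.componentIn S x ⊆ S :=
  Finset.filter_subset _ _

lemma self_mem_componentIn (hx : x ∈ S) : x ∈ G.componentIn S x :=
  mem_componentIn.2 (.refl hx)

lemma componentIn_eq_of_mem (h : y ∈ G.componentIn S x) :
    G.componentIn S y = G.componentIn S x := by
  ext z
  simp only [mem_componentIn]
  exact ⟨(mem_componentIn.1 h).trans, (mem_componentIn.1 h).symm.trans⟩

lemma componentIn_subset_componentIn (hS : S ⊆ S')
    (hG : ∀ a ∈ S, ∀ b ∈ S, G.Adj a b → G'.Adj a b) :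
    G.componentIn S x ⊆ G'.componentIn S' x := fun _ h =>
  mem_componentIn.2 ((mem_componentIn.1 h).mono (Finset.coe_subset.2 hS) hG)

lemma componentIn_eq_singleton (hx : x ∈ S) (hiso : ∀ w, ¬ G.Adj x w) :
    G.componentIn S x = {x} := by
  ext y
  rw [mem_componentIn, Finset.mem_singleton]
  exact ⟨ConnectedIn.eq_of_forall_not_adj hiso, by rintro rfl; exact .refl hx⟩

lemma connected_induce_componentIn (hx : x ∈ S) :
    (G.induce (G.componentIn S x : Set V)).Connected := by
  have hunion : (G.componentIn S x : Set V) =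
      ⋃₀ {t | t ⊆ S ∧ x ∈ t ∧ (G.induce t).Connected} := by
    ext y
    simp only [Finset.mem_coe, mem_componentIn, ConnectedIn, Set.mem_sUnion, Set.mem_ofPred_eq]
    constructor
    · rintro ⟨t, htS, hxt, hyt, ht⟩
      exact ⟨t, ⟨htS, hxt, ht⟩, hyt⟩
    · rintro ⟨t, ⟨htS, hxt, ht⟩, hyt⟩
      exact ⟨t, htS, hxt, hyt, ht⟩
  obtain ⟨t, htS, hxt, -, ht⟩ := ConnectedIn.refl (G := G) (Finset.mem_coe.2 hx)
  rw [hunion]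
  exact induce_sUnion_connected_of_pairwise_not_disjoint ⟨t, htS, hxt, ht⟩
    (fun hs ht => ⟨x, hs.2.1, ht.2.1⟩) (fun hs => hs.2.2)

lemma pairwiseDisjoint_image_componentIn [DecidableEq V] :
    (S.image (G.componentIn S) : Set (Finset V)).PairwiseDisjoint id := by
  simp only [Finset.coe_image]
  rintro _ ⟨a, -, rfl⟩ _ ⟨b, -, rfl⟩ hne
  refine Finset.disjoint_left.2 fun y hya hyb => hne ?_
  rw [← componentIn_eq_of_mem hya, componentIn_eq_of_mem hyb]

lemma card_image_componentIn_le [DecidableEq V] (N : Finset V)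
    (hN : ∀ x ∈ S, ∃ y ∈ N, y ∈ G.componentIn S x) :
    (S.image (G.componentIn S)).card ≤ N.card := by
  refine (Finset.card_le_card (t := N.image (G.componentIn S)) fun _ hc => ?_).trans
    Finset.card_image_le
  obtain ⟨x, hx, rfl⟩ := Finset.mem_image.1 hc
  obtain ⟨y, hyN, hy⟩ := hN x hx
  exact Finset.mem_image.2 ⟨y, hyN, componentIn_eq_of_mem hy⟩

lemma exists_adj_mem_componentIn_erase [DecidableEq V] {v : V}
    (hS : (G.induce (S : Set V)).Connected) (hv : v ∈ S) (hx : x ∈ S.erase v) :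
    ∃ y ∈ G.componentIn (S.erase v) x, G.Adj y v := by
  by_contra! hno
  -- then no walk of `G.induce S` leaves the component of `x` in `S \ {v}`, yet one reaches `v`
  have hreach : ∀ c : (S : Set V), Relation.ReflTransGen (G.induce (S : Set V)).Adj
      ⟨x, Finset.mem_of_mem_erase hx⟩ c → c.1 ∈ G.componentIn (S.erase v) x := by
    intro c hc
    induction hc with
    | refl => exact self_mem_componentIn hx
    | @tail b c _ hbc ih =>
      have hcv : c.1 ≠ v := fun h => hno b ih (h ▸ hbc)
      have hc : c.1 ∈ S.erase v := Finset.mem_erase.2 ⟨hcv, c.2⟩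
      exact mem_componentIn.2 ((mem_componentIn.1 ih).trans
        (.of_adj (componentIn_subset ih) hc hbc))
  have hvx := hreach ⟨v, hv⟩ ((reachable_iff_reflTransGen _ _).1 (hS.preconnected _ _))
  exact Finset.notMem_erase v S (componentIn_subset hvx)

lemma componentIn_deleteIncidenceSet_self (hz : z ∈ S) :
    (G.deleteIncidenceSet z).componentIn S z = {z} :=
  componentIn_eq_singleton hz fun _ h => (deleteIncidenceSet_adj.1 h).2.1 rfl

lemma componentIn_deleteIncidenceSet_subset_erase [DecidableEq V] (hx : x ∈ S) (hxz : x ≠ z) :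
    (G.deleteIncidenceSet z).componentIn S x ⊆ S.erase z := by
  refine fun y hy => Finset.mem_erase.2 ⟨?_, componentIn_subset hy⟩
  rintro rfl
  have hxy : x ∈ (G.deleteIncidenceSet y).componentIn S y := by
    rw [componentIn_eq_of_mem hy]
    exact self_mem_componentIn hx
  rw [componentIn_deleteIncidenceSet_self (componentIn_subset hy)] at hxy
  exact hxz (Finset.mem_singleton.1 hxy)

lemma exists_mem_notMem_forall_not_adj [DecidableEq V] {D : Finset V} {d : ℕ}
    (hdeg : ∀ y ∈ D, (S.filter (G.Adj · y)).card ≤ d) (hcard : D.card * (d + 1) < S.card) :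
    ∃ z ∈ S, z ∉ D ∧ ∀ y ∈ D, ¬ G.Adj z y := by
  set B := D ∪ D.biUnion fun y => S.filter (G.Adj · y)
  have hB : B.card ≤ D.card * (d + 1) := calc
    B.card ≤ D.card + ∑ y ∈ D, (S.filter (G.Adj · y)).card :=
      (Finset.card_union_le _ _).trans (Nat.add_le_add_left Finset.card_biUnion_le _)
    _ ≤ D.card + D.card * d := by
      simpa using Nat.add_le_add_left (Finset.sum_le_card_nsmul D _ d hdeg) D.card
    _ = D.card * (d + 1) := by ring
  obtain ⟨z, hzS, hzB⟩ := Finset.exists_mem_notMem_of_card_lt_card (hB.trans_lt hcard)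
  refine ⟨z, hzS, fun hz => hzB (Finset.mem_union_left _ hz), fun y hy hzy => hzB ?_⟩
  exact Finset.mem_union_right _ (Finset.mem_biUnion.2 ⟨y, hy, Finset.mem_filter.2 ⟨hzS, hzy⟩⟩)

end SimpleGraph

namespace Contracts

variable {G G' : Trigraph α} {u v w x y : α}

lemma mem_sdiff_of_mem_of_ne (h : Contracts G G' u v w) (hx : x ∈ G'.verts) (hxw : x ≠ w) :
    x ∈ G.verts \ {u, v} := by
  rw [h.2.2.2.2.1, Finset.mem_insert] at hx
  exact hx.resolve_left hxw

lemma left_notMem (h : Contracts G G' u v w) : u ∉ G'.verts := fun hu =>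
  (Finset.mem_sdiff.1 (h.mem_sdiff_of_mem_of_ne hu fun huw => h.2.2.2.1 (huw ▸ h.1))).2
    (Finset.mem_insert_self u _)

lemma right_notMem (h : Contracts G G' u v w) : v ∉ G'.verts := fun hv =>
  (Finset.mem_sdiff.1 (h.mem_sdiff_of_mem_of_ne hv fun hvw => h.2.2.2.1 (hvw ▸ h.2.1))).2
    (Finset.mem_insert_of_mem (Finset.mem_singleton_self v))

lemma red_of_red (h : Contracts G G' u v w) (hx : x ∈ G'.verts.erase w)
    (hy : y ∈ G'.verts.erase w) (hxy : G'.red x y) : G.red x y :=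
  ((h.2.2.2.2.2.2.2 x (h.mem_sdiff_of_mem_of_ne (Finset.mem_of_mem_erase hx)
    (Finset.ne_of_mem_erase hx)) y (h.mem_sdiff_of_mem_of_ne (Finset.mem_of_mem_erase hy)
    (Finset.ne_of_mem_erase hy))).2.1 hxy)

end Contracts

section ContractionStep

variable {C : ContractionSeq α n} {i : ℕ} {T : Finset α}

lemma mem_newT {x : α} : x ∈ newT C i T ↔ x ∈ T.erase (C.cw i) ∨ x = C.cu i ∨ x = C.cv i := by
  simp only [newT, Finset.mem_union, Finset.mem_insert, Finset.mem_singleton]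

lemma newT_subset_verts (hstep : Contracts (C.seq (i - 1)) (C.seq i) (C.cu i) (C.cv i) (C.cw i))
    (hT : T ⊆ (C.seq i).verts) : newT C i T ⊆ (C.seq (i - 1)).verts := by
  intro x hx
  rcases mem_newT.1 hx with hx | rfl | rfl
  · exact (Finset.mem_sdiff.1 (hstep.mem_sdiff_of_mem_of_ne (hT (Finset.mem_of_mem_erase hx))
      (Finset.ne_of_mem_erase hx))).1
  · exact hstep.1
  · exact hstep.2.1

lemma card_newT (hstep : Contracts (C.seq (i - 1)) (C.seq i) (C.cu i) (C.cv i) (C.cw i))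
    (hT : T ⊆ (C.seq i).verts) (hv : C.cw i ∈ T) : (newT C i T).card = T.card + 1 := by
  have hdisj : Disjoint (T.erase (C.cw i)) {C.cu i, C.cv i} := by
    simp only [Finset.disjoint_insert_right, Finset.disjoint_singleton_right]
    exact ⟨fun h => hstep.left_notMem (hT (Finset.mem_of_mem_erase h)),
      fun h => hstep.right_notMem (hT (Finset.mem_of_mem_erase h))⟩
  rw [newT, Finset.card_union_of_disjoint hdisj, Finset.card_erase_of_mem hv,
    Finset.card_pair hstep.2.2.1]
  have := Finset.card_pos.2 ⟨_, hv⟩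
  omega

lemma card_filter_redGraph_adj_le {d : ℕ} (hW : C.HasWidth d) (hi : 1 ≤ i) (hin : i ≤ n)
    (x : α) (S : Finset α) : (S.filter ((C.seq i).redGraph.Adj · x)).card ≤ d := by
  have hfin : {y | (C.seq i).red x y}.Finite :=
    (C.seq i).verts.finite_toSet.subset fun y hy => ((C.seq i).red_mem x y hy).2
  calc (S.filter ((C.seq i).redGraph.Adj · x)).card
      = (↑(S.filter ((C.seq i).redGraph.Adj · x)) : Set α).ncard := (Set.ncard_coe_finset _).symm
    _ ≤ {y | (C.seq i).red x y}.ncard := Set.ncard_le_ncard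
        (fun y hy => (C.seq i).red_symm _ _ (Finset.mem_filter.1 hy).2) hfin
    _ ≤ d := hW i hi hin x

end ContractionStep

section Decomposition

variable {C : ContractionSeq α n} {k d i : ℕ} {T D D' : Finset α}

lemma isDDecomp_of_partition (hD' : DCompat C k i T D D') (P : Finset (Finset α))
    (hdisj : (P : Set (Finset α)).PairwiseDisjoint id)
    (hcover : ∀ x, x ∈ newT C i T ↔ ∃ p ∈ P, x ∈ p)
    (hprof : ∀ p ∈ P, IsBasicProfile C k d (i - 1) p (D' ∩ p))
    (hsep : ∀ p ∈ P, ∀ q ∈ P, p ≠ q → ∀ x ∈ p, ∀ y ∈ D' ∩ q, ¬ (C.seq (i - 1)).red x y) :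
    IsDDecomp C k d i T D D' P.card (fun j => P.equivFin.symm j)
      (fun j => D' ∩ P.equivFin.symm j) := by
  have hne : ∀ j ℓ, j ≠ ℓ → (P.equivFin.symm j : Finset α) ≠ P.equivFin.symm ℓ :=
    fun j ℓ hjℓ h => hjℓ (P.equivFin.symm.injective (Subtype.ext h))
  have hmem : ∀ x, (∃ j, x ∈ (P.equivFin.symm j : Finset α)) ↔ ∃ p ∈ P, x ∈ p := fun x =>
    ⟨fun ⟨j, hj⟩ => ⟨_, (P.equivFin.symm j).2, hj⟩,
      fun ⟨p, hp, hx⟩ => ⟨P.equivFin ⟨p, hp⟩, by simpa using hx⟩⟩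
  refine ⟨fun j => hprof _ (P.equivFin.symm j).2,
    fun j ℓ hjℓ => hdisj (P.equivFin.symm j).2 (P.equivFin.symm ℓ).2 (hne j ℓ hjℓ), ?_, ?_, hD',
    fun j ℓ hjℓ => hsep _ (P.equivFin.symm j).2 _ (P.equivFin.symm ℓ).2 (hne j ℓ hjℓ)⟩
  · ext x
    simp only [Finset.mem_biUnion, Finset.mem_univ, true_and, hcover, hmem]
  · ext y
    simp only [Finset.mem_biUnion, Finset.mem_univ, true_and, Finset.mem_inter]
    exact ⟨fun hy => ((hmem y).2 ((hcover y).1 (hD'.1 hy))).imp fun _ h => ⟨hy, h⟩,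
      fun ⟨_, hy, _⟩ => hy⟩

open SimpleGraph in
lemma exists_isDDecomp_of_components (hD' : DCompat C k i T D D')
    (hT' : newT C i T ⊆ (C.seq (i - 1)).verts) {H : SimpleGraph α}
    (hH : H ≤ (C.seq (i - 1)).redGraph)
    (hsmall : ∀ x ∈ newT C i T, (H.componentIn (newT C i T) x).card ≤ k * (d + 1))
    (hD'adj : ∀ x ∈ newT C i T, ∀ y ∈ D', (C.seq (i - 1)).red x y → H.Adj x y)
    (N : Finset α) (hN : ∀ x ∈ newT C i T, ∃ y ∈ N, y ∈ H.componentIn (newT C i T) x) :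
    ∃ (m : ℕ) (Tj Dj : Fin m → Finset α), IsDDecomp C k d i T D D' m Tj Dj ∧ m ≤ N.card := by
  set T' := newT C i T
  refine ⟨_, _, _, isDDecomp_of_partition hD' (T'.image (H.componentIn T'))
    pairwiseDisjoint_image_componentIn ?_ ?_ ?_, card_image_componentIn_le N hN⟩
  · intro x
    simp only [Finset.mem_image, exists_exists_and_eq_and]
    exact ⟨fun hx => ⟨x, hx, self_mem_componentIn hx⟩, fun ⟨_, _, hx⟩ => componentIn_subset hx⟩
  · intro p hp
    obtain ⟨x, hx, rfl⟩ := Finset.mem_image.1 hp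
    exact ⟨componentIn_subset.trans hT', hsmall x hx,
      (connected_induce_componentIn hx).mono fun a b h => hH h, Finset.inter_subset_right,
      (Finset.card_le_card Finset.inter_subset_left).trans hD'.2.2.1⟩
  · intro p hp q hq hpq x hx y hy hxy
    obtain ⟨a, -, rfl⟩ := Finset.mem_image.1 hp
    obtain ⟨b, -, rfl⟩ := Finset.mem_image.1 hq
    obtain ⟨hyD', hy⟩ := Finset.mem_inter.1 hy
    have hyx : y ∈ H.componentIn T' x := mem_componentIn.2 (.of_adj (componentIn_subset hx)
      (componentIn_subset hy) (hD'adj x (componentIn_subset hx) y hyD' hxy))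
    exact hpq (by rw [← componentIn_eq_of_mem hx, ← componentIn_eq_of_mem hy,
      componentIn_eq_of_mem hyx])

end Decomposition

section Cases

open SimpleGraph

variable {C : ContractionSeq α n} {k d i : ℕ} {T D D' : Finset α}

lemma exists_isDDecomp_of_componentIn_card_le (hW : C.HasWidth d) (h2 : 2 ≤ i) (hin : i ≤ n)
    (hπ : IsBasicProfile C k d i T D) (hv : C.cw i ∈ T) (hD' : DCompat C k i T D D')
    (hsmall : ∀ x ∈ newT C i T,
      ((C.seq (i - 1)).redGraph.componentIn (newT C i T) x).card ≤ k * (d + 1)) :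
    ∃ (m : ℕ) (Tj Dj : Fin m → Finset α), IsDDecomp C k d i T D D' m Tj Dj ∧ m ≤ d + 2 := by
  have hstep := C.step i h2 hin
  set N := {C.cu i, C.cv i} ∪ (T.erase (C.cw i)).filter ((C.seq i).redGraph.Adj · (C.cw i))
  have hN : N.card ≤ d + 2 := calc
    N.card ≤ 2 + d := (Finset.card_union_le _ _).trans
      (Nat.add_le_add Finset.card_le_two (card_filter_redGraph_adj_le hW (by omega) hin _ _))
    _ = d + 2 := add_comm _ _
  have hcover : ∀ x ∈ newT C i T,
      ∃ y ∈ N, y ∈ (C.seq (i - 1)).redGraph.componentIn (newT C i T) x := by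
    intro x hx
    rcases mem_newT.1 hx with hxT | rfl | rfl
    · obtain ⟨y, hy, hyv⟩ := exists_adj_mem_componentIn_erase hπ.2.2.1 hv hxT
      refine ⟨y, Finset.mem_union_right _ (Finset.mem_filter.2 ⟨componentIn_subset hy, hyv⟩),
        componentIn_subset_componentIn Finset.subset_union_left (fun a ha b hb h => ?_) hy⟩
      exact hstep.red_of_red (Finset.erase_subset_erase _ hπ.1 ha)
        (Finset.erase_subset_erase _ hπ.1 hb) h
    · exact ⟨_, Finset.mem_union_left _ (Finset.mem_insert_self _ _), self_mem_componentIn hx⟩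
    · exact ⟨_, Finset.mem_union_left _ (Finset.mem_insert_of_mem (Finset.mem_singleton_self _)),
        self_mem_componentIn hx⟩
  obtain ⟨m, Tj, Dj, hdec, hm⟩ := exists_isDDecomp_of_components hD'
    (newT_subset_verts hstep hπ.1) le_rfl hsmall (fun _ _ _ _ h => h) N hcover
  exact ⟨m, Tj, Dj, hdec, hm.trans hN⟩

lemma exists_isDDecomp_of_connected (hW : C.HasWidth d) (h2 : 2 ≤ i) (hin : i ≤ n)
    (hπ : IsBasicProfile C k d i T D) (hv : C.cw i ∈ T) (hD' : DCompat C k i T D D')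
    (hconn : ((C.seq (i - 1)).redGraph.induce (newT C i T : Set α)).Connected)
    (hbig : k * (d + 1) < (newT C i T).card) :
    ∃ (m : ℕ) (Tj Dj : Fin m → Finset α), IsDDecomp C k d i T D D' m Tj Dj ∧ m ≤ d + 1 := by
  have hstep := C.step i h2 hin
  set T' := newT C i T
  set R := (C.seq (i - 1)).redGraph
  have hdeg : ∀ x (S : Finset α), (S.filter (R.Adj · x)).card ≤ d :=
    card_filter_redGraph_adj_le hW (by omega) (by omega)
  obtain ⟨z, hzT', hzD', hz⟩ := exists_mem_notMem_forall_not_adj (fun y _ => hdeg y T')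
    ((Nat.mul_le_mul_right _ hD'.2.2.1).trans_lt hbig)
  -- deleting the red edges at `z` makes `{z}` one part and the red components of `T' \ {z}`
  -- the others
  set H := R.deleteIncidenceSet z
  have hsmall : ∀ x ∈ T', (H.componentIn T' x).card ≤ k * (d + 1) := by
    intro x hx
    have hTk := hπ.2.1
    have hTpos := Finset.card_pos.2 ⟨_, hv⟩
    by_cases hxz : x = z
    · rw [hxz, componentIn_deleteIncidenceSet_self hzT', Finset.card_singleton]
      omega
    have hsub : H.componentIn T' x ⊆ T'.erase z :=
      componentIn_deleteIncidenceSet_subset_erase hx hxz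
    have := Finset.card_le_card hsub
    rw [Finset.card_erase_of_mem hzT', card_newT hstep hπ.1 hv] at this
    omega
  set N := insert z (T'.filter (R.Adj · z))
  have hcover : ∀ x ∈ T', ∃ y ∈ N, y ∈ H.componentIn T' x := by
    intro x hx
    by_cases hxz : x = z
    · exact ⟨z, Finset.mem_insert_self _ _, hxz ▸ self_mem_componentIn hx⟩
    obtain ⟨y, hy, hyz⟩ :=
      exists_adj_mem_componentIn_erase hconn hzT' (Finset.mem_erase.2 ⟨hxz, hx⟩)
    refine ⟨y, Finset.mem_insert_of_mem (Finset.mem_filter.2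
      ⟨Finset.mem_of_mem_erase (componentIn_subset hy), hyz⟩), ?_⟩
    exact componentIn_subset_componentIn (Finset.erase_subset z T')
      (fun a ha b hb h => deleteIncidenceSet_adj.2
        ⟨h, Finset.ne_of_mem_erase ha, Finset.ne_of_mem_erase hb⟩) hy
  obtain ⟨m, Tj, Dj, hdec, hm⟩ := exists_isDDecomp_of_components hD'
    (newT_subset_verts hstep hπ.1) (deleteIncidenceSet_le R z) hsmall
    (fun x _ y hy h => deleteIncidenceSet_adj.2
      ⟨h, fun hxz => hz y hy (hxz ▸ h), fun hyz => hzD' (hyz ▸ hy)⟩) N hcover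
  exact ⟨m, Tj, Dj, hdec,
    hm.trans ((Finset.card_insert_le _ _).trans (Nat.add_le_add_right (hdeg z T') 1))⟩

end Cases

/-- (Lemma 2.) For every basic `i`-profile `(T, D)` containing the new
vertex `v = cw i` and every `D' ⊆ T'` compatible with it, there is a `D'`-decomposition
with at most `d + 2` basic `(i-1)`-profiles. -/
theorem basic_decomposition_exists {α : Type} [DecidableEq α] {n : ℕ}
    (C : ContractionSeq α n) (d k : ℕ) (hW : C.HasWidth d)
    (i : ℕ) (h2 : 2 ≤ i) (hin : i ≤ n)
    (T D : Finset α) (hπ : IsBasicProfile C k d i T D) (hv : C.cw i ∈ T)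
    (D' : Finset α) (hD' : DCompat C k i T D D') :
    ∃ (m : ℕ) (Tj Dj : Fin m → Finset α),
      IsDDecomp C k d i T D D' m Tj Dj ∧ m ≤ d + 2 := by
  set R := (C.seq (i - 1)).redGraph
  by_cases hsmall : ∀ x ∈ newT C i T, (R.componentIn (newT C i T) x).card ≤ k * (d + 1)
  · exact exists_isDDecomp_of_componentIn_card_le hW h2 hin hπ hv hD' hsmall
  push Not at hsmall
  obtain ⟨x, hx, hbig⟩ := hsmall
  have hcomp : R.componentIn (newT C i T) x = newT C i T := by
    refine Finset.eq_of_subset_of_card_le SimpleGraph.componentIn_subset ?_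
    rw [card_newT (C.step i h2 hin) hπ.1 hv]
    have := hπ.2.1
    omega
  have hconn := SimpleGraph.connected_induce_componentIn (G := R) hx
  rw [hcomp] at hconn hbig
  obtain ⟨m, Tj, Dj, hdec, hm⟩ := exists_isDDecomp_of_connected hW h2 hin hπ hv hD' hconn hbig
  exact ⟨m, Tj, Dj, hdec, hm.trans (Nat.le_succ _)⟩
end

section
/- Let G be a graph with a contraction sequence (G = G_1, ..., G_n) of width d and let k be a natural number. Let i in [2, n], let π be an extended i-profile with v in T (where v is the new vertex of G_i), let f' be compatible with π, let {π_j : j in [m]} be an f'-decomposition of π, and let S_j be a solution of π_j for each j in [m]. Then S = ∪_{j∈[m]} S_j is a solution of π. -/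
attribute [local instance 10] Classical.propDecidable

variable {α : Type} [DecidableEq α]

variable {n : ℕ}

/-! Distinct vertices of a trigraph `Gᵢ` have disjoint bags, so the pieces `Sⱼ ⊆ β(Tⱼ)`
of the union do not interfere: `|S ∩ β(u)| = |Sⱼ ∩ β(u)| = f'(u)` for `u ∈ Tⱼ`. Passing
from `Gᵢ₋₁` to `Gᵢ` only replaces the two disjoint bags `β(u₁), β(u₂)` by their union
`β(v)`, whose count is `f'(u₁) + f'(u₂) = f(v)`. -/

lemma Contracts.mem_verts_of_ne {G G' : Trigraph α} {u v w x : α} (h : Contracts G G' u v w)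
    (hx : x ∈ G'.verts) (hxw : x ≠ w) : x ∈ G.verts ∧ x ≠ u ∧ x ≠ v := by
  obtain ⟨-, -, -, -, hverts, -⟩ := h
  rw [hverts] at hx
  simpa [hxw] using hx

namespace ContractionSeq

variable (C : ContractionSeq α n)

lemma bag_of_two_le {i : ℕ} (h : 2 ≤ i) (x : α) :
    C.bag i x = if x = C.cw i then C.bag (i - 1) (C.cu i) ∪ C.bag (i - 1) (C.cv i)
      else C.bag (i - 1) x := by
  obtain ⟨j, rfl⟩ : ∃ j, i = j + 2 := ⟨i - 2, by omega⟩
  simp [bag]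

lemma bag_cw {i : ℕ} (h : 2 ≤ i) :
    C.bag i (C.cw i) = C.bag (i - 1) (C.cu i) ∪ C.bag (i - 1) (C.cv i) := by
  rw [bag_of_two_le C h, if_pos rfl]

lemma bag_of_ne_cw {i : ℕ} (h : 2 ≤ i) {x : α} (hx : x ≠ C.cw i) :
    C.bag i x = C.bag (i - 1) x := by
  rw [bag_of_two_le C h, if_neg hx]

lemma disjoint_bag {i : ℕ} (h1 : 1 ≤ i) (hin : i ≤ n) {x y : α}
    (hx : x ∈ (C.seq i).verts) (hy : y ∈ (C.seq i).verts) (hxy : x ≠ y) :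
    Disjoint (C.bag i x) (C.bag i y) := by
  induction i, h1 using Nat.le_induction generalizing x y with
  | base => simpa [bag] using hxy
  | succ i hi IH =>
    have hstep := C.step (i + 1) (by omega) hin
    have IH' := @IH (by omega)
    simp only [Nat.add_sub_cancel] at hstep
    have hu := hstep.1
    have hv := hstep.2.1
    have hbag_cw := C.bag_cw (i := i + 1) (by omega)
    have hbag_ne := fun {z} => C.bag_of_ne_cw (i := i + 1) (x := z) (by omega)
    simp only [Nat.add_sub_cancel] at hbag_cw hbag_ne
    have cw_old : ∀ {z}, z ∈ (C.seq (i + 1)).verts → z ≠ C.cw (i + 1) →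
        Disjoint (C.bag (i + 1) (C.cw (i + 1))) (C.bag (i + 1) z) := by
      intro z hz hzw
      obtain ⟨hz, hzu, hzv⟩ := hstep.mem_verts_of_ne hz hzw
      rw [hbag_cw, hbag_ne hzw]
      exact Finset.disjoint_union_left.2 ⟨IH' hu hz (Ne.symm hzu), IH' hv hz (Ne.symm hzv)⟩
    by_cases hxw : x = C.cw (i + 1)
    · subst hxw
      exact cw_old hy (Ne.symm hxy)
    by_cases hyw : y = C.cw (i + 1)
    · subst hyw
      exact (cw_old hx hxy).symm
    rw [hbag_ne hxw, hbag_ne hyw]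
    exact IH' (hstep.mem_verts_of_ne hx hxw).1 (hstep.mem_verts_of_ne hy hyw).1 hxy

lemma disjoint_bags_bag {i : ℕ} (h1 : 1 ≤ i) (hin : i ≤ n) {T : Finset α} {x : α}
    (hT : T ⊆ (C.seq i).verts) (hx : x ∈ (C.seq i).verts) (hxT : x ∉ T) :
    Disjoint (C.bags i T) (C.bag i x) :=
  (Finset.disjoint_biUnion_left _ _ _).2 fun _ hy =>
    C.disjoint_bag h1 hin (hT hy) hx fun hyx => hxT (hyx ▸ hy)

lemma bags_newT {i : ℕ} (h : 2 ≤ i) {T : Finset α} (hv : C.cw i ∈ T) :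
    C.bags (i - 1) (newT C i T) = C.bags i T := by
  have hrest : C.bags i (T.erase (C.cw i)) = C.bags (i - 1) (T.erase (C.cw i)) :=
    Finset.biUnion_congr rfl fun x hx => C.bag_of_ne_cw h (Finset.ne_of_mem_erase hx)
  conv_rhs => rw [← Finset.insert_erase hv, bags, Finset.biUnion_insert, ← bags, hrest,
    C.bag_cw h]
  rw [newT, bags, Finset.union_biUnion, Finset.biUnion_insert, Finset.singleton_biUnion, ← bags,
    Finset.union_comm, Finset.union_assoc]

end ContractionSeq

lemma IsSolution.congr {C : ContractionSeq α n} {i : ℕ} {T S : Finset α} {f g : α → ℕ}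
    (hS : IsSolution C i T f S) (hfg : ∀ u ∈ T, f u = g u) : IsSolution C i T g S :=
  ⟨hS.1, fun u hu => hfg u hu ▸ hS.2 u hu⟩

lemma isSolution_biUnion {C : ContractionSeq α n} {i m : ℕ} (h1 : 1 ≤ i) (hin : i ≤ n)
    {Tj Sj : Fin m → Finset α} {f : α → ℕ} (hT : ∀ j, Tj j ⊆ (C.seq i).verts)
    (hdisj : Pairwise fun j ℓ => Disjoint (Tj j) (Tj ℓ))
    (hS : ∀ j, IsSolution C i (Tj j) f (Sj j)) :
    IsSolution C i (Finset.univ.biUnion Tj) f (Finset.univ.biUnion Sj) := by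
  refine ⟨Finset.biUnion_subset.2 fun j _ => (hS j).1.trans
    (Finset.biUnion_subset_biUnion_of_subset_left _
      (Finset.subset_biUnion_of_mem _ (Finset.mem_univ j))), ?_⟩
  intro u hu
  obtain ⟨j, -, huj⟩ := Finset.mem_biUnion.1 hu
  have only_j : Finset.univ.biUnion Sj ∩ C.bag i u = Sj j ∩ C.bag i u := by
    ext a
    simp only [Finset.mem_inter, Finset.mem_biUnion, Finset.mem_univ, true_and]
    refine ⟨fun ⟨⟨ℓ, haℓ⟩, hau⟩ => ⟨?_, hau⟩, fun ⟨haj, hau⟩ => ⟨⟨j, haj⟩, hau⟩⟩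
    obtain rfl | hℓj := eq_or_ne ℓ j
    · exact haℓ
    · have hℓu := C.disjoint_bags_bag h1 hin (hT ℓ) (hT j huj)
        (Finset.disjoint_right.1 (hdisj hℓj) huj)
      exact absurd hau (Finset.disjoint_left.1 hℓu ((hS ℓ).1 haℓ))
  rw [only_j, (hS j).2 u huj]

lemma IsSolution.of_newT {C : ContractionSeq α n} {i : ℕ} (h2 : 2 ≤ i) (hin : i ≤ n)
    {T S : Finset α} (hv : C.cw i ∈ T) {f f' : α → ℕ}
    (hfv : f (C.cw i) = f' (C.cu i) + f' (C.cv i))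
    (hf'T : ∀ u ∈ T.erase (C.cw i), f' u = f u)
    (hS : IsSolution C (i - 1) (newT C i T) f' S) : IsSolution C i T f S := by
  refine ⟨C.bags_newT h2 hv ▸ hS.1, fun u hu => ?_⟩
  have hu₁ : C.cu i ∈ newT C i T := by simp [newT]
  have hu₂ : C.cv i ∈ newT C i T := by simp [newT]
  obtain rfl | huv := eq_or_ne u (C.cw i)
  · obtain ⟨hcu, hcv, hne, -⟩ := C.step i h2 hin
    have hdisj := C.disjoint_bag (by omega) (by omega) hcu hcv hne
    rw [C.bag_cw h2, Finset.inter_union_distrib_left, Finset.card_union_of_disjoint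
      (hdisj.mono Finset.inter_subset_right Finset.inter_subset_right),
      ← hS.2 _ hu₁, ← hS.2 _ hu₂, hfv]
  · have hu' : u ∈ T.erase (C.cw i) := Finset.mem_erase.2 ⟨huv, hu⟩
    rw [C.bag_of_ne_cw h2 huv, ← hS.2 u (Finset.mem_union_left _ hu'), hf'T u hu']

theorem union_of_solutions_general {α : Type} [DecidableEq α] {n : ℕ}
    (C : ContractionSeq α n) (d k : ℕ)
    (i : ℕ) (h2 : 2 ≤ i) (hin : i ≤ n)
    (T D M : Finset α) (f : α → ℕ)
    (hv : C.cw i ∈ T)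
    (f' : α → ℕ) (hf' : FCompat C k i T f f')
    (m : ℕ) (Tj Dj Mj : Fin m → Finset α) (fj : Fin m → α → ℕ)
    (hdec : IsFDecomp C k d i T D M f' m Tj Dj Mj fj)
    (Sj : Fin m → Finset α)
    (hSj : ∀ j, IsSolution C (i - 1) (Tj j) (fj j) (Sj j)) :
    IsSolution C i T f (Finset.univ.biUnion Sj) := by
  obtain ⟨-, hfj, -, -, hbasic, hdisj, hTunion, -⟩ := hdec
  obtain ⟨-, -, hfv, -, -, hf'T⟩ := hf'
  have hunion : IsSolution C (i - 1) (newT C i T) f' (Finset.univ.biUnion Sj) :=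
    hTunion ▸ isSolution_biUnion (by omega) (by omega) (fun j => (hbasic j).1) hdisj
      fun j => (hSj j).congr (hfj j)
  exact hunion.of_newT h2 hin hv hfv hf'T

/-- (Lemma 7.) Merging solutions of the profiles of an
`f'`-decomposition of an extended `i`-profile `π` yields a solution of `π`. -/
theorem union_of_solutions {α : Type} [DecidableEq α] {n : ℕ}
    (C : ContractionSeq α n) (d k : ℕ) (hW : C.HasWidth d)
    (i : ℕ) (h2 : 2 ≤ i) (hin : i ≤ n)
    (T D M : Finset α) (f : α → ℕ) (hπ : IsExtProfile C k d i T D M f)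
    (hv : C.cw i ∈ T)
    (f' : α → ℕ) (hf' : FCompat C k i T f f')
    (m : ℕ) (Tj Dj Mj : Fin m → Finset α) (fj : Fin m → α → ℕ)
    (hdec : IsFDecomp C k d i T D M f' m Tj Dj Mj fj)
    (Sj : Fin m → Finset α)
    (hSj : ∀ j, IsSolution C (i - 1) (Tj j) (fj j) (Sj j)) :
    IsSolution C i T f (Finset.univ.biUnion Sj) :=
  union_of_solutions_general C d k i h2 hin T D M f hv f' hf' m Tj Dj Mj fj hdec Sj hSj
end
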